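/- Spatial total variation diminishing property with geometric weights under the weaker CFL condition: assume the weights are geometric, γ_k = γ₀ (1−γ₀)^k with γ₀ ∈ (0,1), and assume the CFL condition λ(M + L) ≤ 1. Then for every n ∈ ℕ: ∑_{j∈ℤ} |W^{n+1}_{j+1} − W^{n+1}_j| ≤ ∑_{j∈ℤ} |Wⁿ_{j+1} − Wⁿ_j| ≤ ∑_{j∈ℤ} |ρ⁰_{j+1} − ρ⁰_j|, where the sums of nonnegative terms are valued in [0,∞]. -/

import Mathlib

/-!
For geometric weights the nonlocal average obeys `W_j = γ₀ ρ_j + (1 - γ₀) W_{j+1}`, so `ρ` can be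
read off `W`. This gives the maximum principle `0 ≤ ρⁿ ≤ 1`, and, after summing the scheme against
the weights and telescoping, the update
`W^{n+1}_j = W_j - λ V(W_j) (W_j - W_{j-1}) + λ ∑_k γ_k g_{j+k}`,
`g_m = W_m (V(W_m) - V(W_{m+1}))`.
Since `V` is antitone and `L`-Lipschitz, `g_m` has the sign of `W_{m+1} - W_m` and size at most
`L |W_{m+1} - W_m|`. So, under `λ (M + L) ≤ 1`, the new difference `W^{n+1}_{j+1} - W^{n+1}_j` is
bounded by a nonnegative combination of the old differences in which the weights attached to each
`|W_{m+1} - W_m|` add up to one; summing over `j` cannot increase the total variation. At `n = 0`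
the differences of `W⁰` are `γ`-averages of those of `ρ⁰`.
-/

open scoped ENNReal
open Set

noncomputable def nonlocalAvg (γ : ℕ → ℝ) (f : ℤ → ℝ) (j : ℤ) : ℝ :=
  ∑' k : ℕ, γ k * f (j + k)

def geomWeights (γ0 : ℝ) (k : ℕ) : ℝ := γ0 * (1 - γ0) ^ k

noncomputable def totalVariation (f : ℤ → ℝ) : ℝ≥0∞ :=
  ∑' j : ℤ, ENNReal.ofReal |f (j + 1) - f j|

def nonlocalCorrection (V : ℝ → ℝ) (w : ℤ → ℝ) (m : ℤ) : ℝ := w m * (V (w m) - V (w (m + 1)))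

noncomputable def godunovStep (lam : ℝ) (V : ℝ → ℝ) (γ : ℕ → ℝ) (ρ : ℤ → ℝ) (j : ℤ) : ℝ :=
  ρ j + lam * (ρ (j - 1) * V (nonlocalAvg γ ρ j) - ρ j * V (nonlocalAvg γ ρ (j + 1)))

theorem Summable.hasSum_succ_sub {G : Type*} [AddCommGroup G] [TopologicalSpace G]
    [IsTopologicalAddGroup G] {f : ℕ → G} (hf : Summable f) :
    HasSum (fun k => f (k + 1) - f k) (-f 0) := by
  simpa using ((hasSum_nat_add_iff' 1).2 hf.hasSum).sub hf.hasSum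

section NonlocalAvg

variable {γ : ℕ → ℝ} {f : ℤ → ℝ} {C : ℝ}

theorem summable_nonlocalAvg (hγ : ∀ k, 0 ≤ γ k) (hγs : Summable γ) (hf : ∀ m, |f m| ≤ C)
    (j : ℤ) : Summable fun k : ℕ => γ k * f (j + k) :=
  (hγs.mul_right C).of_norm_bounded fun k => by
    rw [Real.norm_eq_abs, abs_mul, abs_of_nonneg (hγ k)]
    exact mul_le_mul_of_nonneg_left (hf _) (hγ k)

theorem nonlocalAvg_mem_Icc (hγ : ∀ k, 0 ≤ γ k) (hγ1 : HasSum γ 1) {a b : ℝ}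
    (hf : ∀ m, f m ∈ Icc a b) (j : ℤ) : nonlocalAvg γ f j ∈ Icc a b := by
  have hs := (summable_nonlocalAvg hγ hγ1.summable
    (fun m => abs_le_max_abs_abs (hf m).1 (hf m).2) j).hasSum
  constructor
  · simpa [nonlocalAvg] using hasSum_le (fun k => mul_le_mul_of_nonneg_left (hf _).1 (hγ k))
      (hγ1.mul_right a) hs
  · simpa [nonlocalAvg] using hasSum_le (fun k => mul_le_mul_of_nonneg_left (hf _).2 (hγ k))
      hs (hγ1.mul_right b)

theorem abs_nonlocalAvg_le_of_abs_le (hγ : ∀ k, 0 ≤ γ k) (hγ1 : HasSum γ 1)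
    (hf : ∀ m, |f m| ≤ C) (j : ℤ) : |nonlocalAvg γ f j| ≤ C :=
  abs_le.2 (nonlocalAvg_mem_Icc hγ hγ1 (fun m => abs_le.1 (hf m)) j)

theorem abs_nonlocalAvg_le (hγ : ∀ k, 0 ≤ γ k) (hγs : Summable γ) (hf : ∀ m, |f m| ≤ C)
    (j : ℤ) : |nonlocalAvg γ f j| ≤ nonlocalAvg γ (fun m => |f m|) j := by
  have hnorm (k : ℕ) : γ k * |f (j + k)| = ‖γ k * f (j + k)‖ := by
    rw [Real.norm_eq_abs, abs_mul, abs_of_nonneg (hγ k)]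
  have hs := summable_nonlocalAvg hγ hγs (f := fun m => |f m|)
    (fun m => (abs_abs (f m)).trans_le (hf m)) j
  calc |nonlocalAvg γ f j| ≤ ∑' k : ℕ, ‖γ k * f (j + k)‖ :=
        norm_tsum_le_tsum_norm (hs.congr hnorm)
    _ = nonlocalAvg γ (fun m => |f m|) j := by
        simp only [nonlocalAvg, Real.norm_eq_abs, abs_mul, abs_of_nonneg (hγ _)]

theorem nonlocalAvg_const_mul (c : ℝ) (j : ℤ) :
    nonlocalAvg γ (fun m => c * f m) j = c * nonlocalAvg γ f j := by
  simp only [nonlocalAvg, ← tsum_mul_left, mul_left_comm]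

theorem tsum_ofReal_nonlocalAvg (hγ : ∀ k, 0 ≤ γ k) (hγ1 : HasSum γ 1)
    (hf : ∀ m, f m ∈ Icc 0 C) :
    ∑' j, ENNReal.ofReal (nonlocalAvg γ f j) = ∑' m, ENNReal.ofReal (f m) := by
  have hfC : ∀ m, |f m| ≤ C := fun m => (abs_of_nonneg (hf m).1).trans_le (hf m).2
  calc ∑' j, ENNReal.ofReal (nonlocalAvg γ f j)
      = ∑' (j : ℤ) (k : ℕ), ENNReal.ofReal (γ k) * ENNReal.ofReal (f (j + k)) := by
        refine tsum_congr fun j => ?_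
        rw [nonlocalAvg, ENNReal.ofReal_tsum_of_nonneg
          (fun k => mul_nonneg (hγ k) (hf _).1) (summable_nonlocalAvg hγ hγ1.summable hfC j)]
        simp only [ENNReal.ofReal_mul (hγ _)]
    _ = ∑' k : ℕ, ENNReal.ofReal (γ k) * ∑' m, ENNReal.ofReal (f m) := by
        rw [ENNReal.tsum_comm]
        refine tsum_congr fun k => ?_
        rw [ENNReal.tsum_mul_left]
        exact congrArg (_ * ·) ((Equiv.addRight (k : ℤ)).tsum_eq fun m => ENNReal.ofReal (f m))
    _ = ∑' m, ENNReal.ofReal (f m) := by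
        rw [ENNReal.tsum_mul_right, ← ENNReal.ofReal_tsum_of_nonneg hγ hγ1.summable,
          hγ1.tsum_eq, ENNReal.ofReal_one, one_mul]

theorem totalVariation_nonlocalAvg_le (hγ : ∀ k, 0 ≤ γ k) (hγ1 : HasSum γ 1)
    (hf : ∀ m, |f m| ≤ C) : totalVariation (nonlocalAvg γ f) ≤ totalVariation f := by
  have hdiff : ∀ m, |f (m + 1) - f m| ∈ Icc 0 (2 * C) := fun m =>
    ⟨abs_nonneg _, (abs_sub _ _).trans (by linarith [hf (m + 1), hf m])⟩
  have hstep : ∀ j, nonlocalAvg γ f (j + 1) - nonlocalAvg γ f j =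
      nonlocalAvg γ (fun m => f (m + 1) - f m) j := by
    intro j
    rw [nonlocalAvg, nonlocalAvg, nonlocalAvg,
      ← (summable_nonlocalAvg hγ hγ1.summable hf _).tsum_sub
        (summable_nonlocalAvg hγ hγ1.summable hf j)]
    exact tsum_congr fun k => by rw [add_right_comm]; ring
  calc totalVariation (nonlocalAvg γ f)
      ≤ ∑' j, ENNReal.ofReal (nonlocalAvg γ (fun m => |f (m + 1) - f m|) j) := by
        refine ENNReal.tsum_le_tsum fun j => ENNReal.ofReal_le_ofReal ?_
        rw [hstep]
        exact abs_nonlocalAvg_le hγ hγ1.summable (fun m => (hdiff m).2) j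
    _ = totalVariation f := tsum_ofReal_nonlocalAvg hγ hγ1 hdiff

theorem tsum_ofReal_le_of_le_add_nonlocalAvg (hγ : ∀ k, 0 ≤ γ k) (hγ1 : HasSum γ 1)
    {u x p r s : ℤ → ℝ} (hp : ∀ j, 0 ≤ p j) (hr : ∀ j, 0 ≤ r j) (hs : ∀ m, s m ∈ Icc 0 C)
    (hu : ∀ j, u j ≤ p j + r j + nonlocalAvg γ s (j + 1))
    (hx : ∀ m, p (m + 1) + r m + s m = x m) :
    ∑' j, ENNReal.ofReal (u j) ≤ ∑' m, ENNReal.ofReal (x m) := by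
  have hshift (g : ℤ → ℝ≥0∞) : ∑' j, g (j + 1) = ∑' j, g j := (Equiv.addRight 1).tsum_eq g
  calc ∑' j, ENNReal.ofReal (u j)
      ≤ ∑' j, (ENNReal.ofReal (p j) + ENNReal.ofReal (r j)
          + ENNReal.ofReal (nonlocalAvg γ s (j + 1))) := by
        refine ENNReal.tsum_le_tsum fun j => (ENNReal.ofReal_le_ofReal (hu j)).trans ?_
        refine ENNReal.ofReal_add_le.trans ?_
        gcongr
        exact ENNReal.ofReal_add_le
    _ = ∑' m, (ENNReal.ofReal (p (m + 1)) + ENNReal.ofReal (r m) + ENNReal.ofReal (s m)) := by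
        rw [ENNReal.tsum_add, ENNReal.tsum_add, ENNReal.tsum_add, ENNReal.tsum_add,
          ← hshift fun j => ENNReal.ofReal (p j),
          hshift fun j => ENNReal.ofReal (nonlocalAvg γ s j),
          tsum_ofReal_nonlocalAvg hγ hγ1 hs]
    _ = ∑' m, ENNReal.ofReal (x m) := by
        refine tsum_congr fun m => ?_
        rw [← hx, ENNReal.ofReal_add (add_nonneg (hp _) (hr m)) (hs m).1,
          ENNReal.ofReal_add (hp _) (hr m)]

end NonlocalAvg

section Geometric

variable {γ0 : ℝ}

theorem geomWeights_nonneg (hγ0 : γ0 ∈ Icc 0 1) (k : ℕ) : 0 ≤ geomWeights γ0 k :=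
  mul_nonneg hγ0.1 (pow_nonneg (by linarith [hγ0.2]) k)

theorem hasSum_geomWeights (hγ0 : γ0 ∈ Ioc 0 1) : HasSum (geomWeights γ0) 1 := by
  have := (hasSum_geometric_of_lt_one (r := 1 - γ0) (by linarith [hγ0.2])
    (by linarith [hγ0.1])).mul_left γ0
  rwa [sub_sub_cancel, mul_inv_cancel₀ hγ0.1.ne'] at this

theorem nonlocalAvg_geomWeights (hγ0 : γ0 ∈ Ioc 0 1) {f : ℤ → ℝ} {C : ℝ}
    (hf : ∀ m, |f m| ≤ C) (j : ℤ) :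
    nonlocalAvg (geomWeights γ0) f j =
      γ0 * f j + (1 - γ0) * nonlocalAvg (geomWeights γ0) f (j + 1) := by
  rw [nonlocalAvg, (summable_nonlocalAvg (geomWeights_nonneg (Ioc_subset_Icc_self hγ0))
    (hasSum_geomWeights hγ0).summable hf j).tsum_eq_zero_add, nonlocalAvg, ← tsum_mul_left]
  simp only [geomWeights]
  push_cast
  congr 1
  · simp
  · exact tsum_congr fun k => by rw [add_assoc, add_comm 1 (k : ℤ)]; ring

end Geometric

theorem abs_sub_eq_abs_sub_abs_of_mul_nonneg {α : Type*} [CommRing α] [LinearOrder α]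
    [IsStrictOrderedRing α] {x y : α} (hxy : 0 ≤ x * y) (h : |y| ≤ |x|) : |x - y| = |x| - |y| := by
  rcases le_total 0 x with hx | hx <;> rcases le_total 0 y with hy | hy
  · rw [abs_of_nonneg hx, abs_of_nonneg hy] at *
    rw [abs_of_nonneg (by linarith)]
  · rw [abs_of_nonneg hx, abs_of_nonpos hy] at *
    have : x * y = 0 := le_antisymm (mul_nonpos_of_nonneg_of_nonpos hx hy) hxy
    rcases mul_eq_zero.1 this with h0 | h0 <;> subst h0 <;> simp_all
  · rw [abs_of_nonpos hx, abs_of_nonneg hy] at *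
    have : x * y = 0 := le_antisymm (mul_nonpos_of_nonpos_of_nonneg hx hy) hxy
    rcases mul_eq_zero.1 this with h0 | h0 <;> subst h0 <;> simp_all
  · rw [abs_of_nonpos hx, abs_of_nonpos hy] at *
    rw [abs_of_nonpos (by linarith)]
    ring

theorem AntitoneOn.sub_mul_sub_nonneg {f : ℝ → ℝ} {s : Set ℝ} (hf : AntitoneOn f s) {x y : ℝ}
    (hx : x ∈ s) (hy : y ∈ s) : 0 ≤ (y - x) * (f x - f y) := by
  rcases le_total x y with h | h
  · exact mul_nonneg (sub_nonneg.2 h) (sub_nonneg.2 (hf hx hy h))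
  · exact mul_nonneg_of_nonpos_of_nonpos (sub_nonpos.2 h) (sub_nonpos.2 (hf hy hx h))

theorem abs_incremental_split {lam L M γ0 v d g : ℝ} (hlam : 0 ≤ lam) (hL : 0 ≤ L)
    (hCFL : lam * (M + L) ≤ 1) (hγ0 : γ0 ∈ Icc 0 1) (hv : v ≤ M) (hdg : 0 ≤ d * g)
    (hg : |g| ≤ L * |d|) :
    lam * v * |d| + |(1 - lam * v) * d - lam * γ0 * g| + lam * γ0 * |g| = |d| := by
  have hlamγ0 : 0 ≤ lam * γ0 := mul_nonneg hlam hγ0.1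
  have hcoef : lam * L ≤ 1 - lam * v := by nlinarith [mul_le_mul_of_nonneg_left hv hlam]
  have hc : 0 ≤ 1 - lam * v := (mul_nonneg hlam hL).trans hcoef
  have hx : |(1 - lam * v) * d| = (1 - lam * v) * |d| := by rw [abs_mul, abs_of_nonneg hc]
  have hy : |lam * γ0 * g| = lam * γ0 * |g| := by rw [abs_mul, abs_of_nonneg hlamγ0]
  have hprod : 0 ≤ (1 - lam * v) * d * (lam * γ0 * g) := by
    rw [show (1 - lam * v) * d * (lam * γ0 * g) = (1 - lam * v) * (lam * γ0) * (d * g) by ring]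
    exact mul_nonneg (mul_nonneg hc hlamγ0) hdg
  have hle : |lam * γ0 * g| ≤ |(1 - lam * v) * d| := by
    rw [hx, hy]
    calc lam * γ0 * |g| ≤ lam * (L * |d|) :=
          mul_le_mul (mul_le_of_le_one_right hlam hγ0.2) hg (abs_nonneg _) hlam
      _ ≤ (1 - lam * v) * |d| := by
          rw [← mul_assoc]; exact mul_le_mul_of_nonneg_right hcoef (abs_nonneg _)
  rw [abs_sub_eq_abs_sub_abs_of_mul_nonneg hprod hle, hx, hy]
  ring

section Godunov

variable {lam L M γ0 C K : ℝ} {V : ℝ → ℝ} {ρ w : ℤ → ℝ}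

theorem godunovStep_mem_Icc (hlam : 0 ≤ lam) (hL : 0 ≤ L)
    (hVlip : ∀ x y, |V x - V y| ≤ L * |x - y|) (hVmono : AntitoneOn V (Icc 0 1))
    (hVbd : ∀ ξ ∈ Icc (0 : ℝ) 1, V ξ ∈ Icc 0 M) (hCFL : lam * (M + L) ≤ 1)
    (hγ0 : γ0 ∈ Ioc 0 1) (hρ : ∀ m, ρ m ∈ Icc 0 1) (j : ℤ) :
    godunovStep lam V (geomWeights γ0) ρ j ∈ Icc 0 1 := by
  set w := nonlocalAvg (geomWeights γ0) ρ
  have hw : ∀ m, w m ∈ Icc 0 1 :=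
    nonlocalAvg_mem_Icc (geomWeights_nonneg (Ioc_subset_Icc_self hγ0)) (hasSum_geomWeights hγ0) hρ
  have hrec : w j = γ0 * ρ j + (1 - γ0) * w (j + 1) :=
    nonlocalAvg_geomWeights hγ0 (fun m => (abs_of_nonneg (hρ m).1).trans_le (hρ m).2) j
  obtain ⟨hρj0, hρj1⟩ := hρ j
  obtain ⟨hρl0, hρl1⟩ := hρ (j - 1)
  obtain ⟨hVj0, -⟩ := hVbd _ (hw j)
  obtain ⟨-, hVrM⟩ := hVbd _ (hw (j + 1))
  have hVdiff : V (w j) - V (w (j + 1)) ≤ L * (1 - ρ j) := by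
    rcases le_total (w (j + 1)) (w j) with h | h
    · linarith [hVmono (hw _) (hw _) h, mul_nonneg hL (sub_nonneg.2 hρj1)]
    · have hlip := (le_abs_self _).trans (hVlip (w j) (w (j + 1)))
      rw [abs_sub_comm, abs_of_nonneg (sub_nonneg.2 h)] at hlip
      have e : w (j + 1) - w j = γ0 * (w (j + 1) - ρ j) := by rw [hrec]; ring
      have hpos : 0 ≤ w (j + 1) - ρ j :=
        (mul_nonneg_iff_of_pos_left hγ0.1).1 (e ▸ sub_nonneg.2 h)
      have hinc : w (j + 1) - w j ≤ 1 - ρ j := by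
        rw [e]; nlinarith [mul_nonneg (sub_nonneg.2 hγ0.2) hpos, (hw (j + 1)).2]
      linarith [mul_le_mul_of_nonneg_left hinc hL]
  have hlamV : lam * V (w (j + 1)) ≤ 1 := by
    nlinarith [mul_le_mul_of_nonneg_left hVrM hlam, mul_nonneg hlam hL]
  show ρ j + lam * (ρ (j - 1) * V (w j) - ρ j * V (w (j + 1))) ∈ Icc 0 1
  constructor
  · nlinarith [mul_nonneg hlam (mul_nonneg hρl0 hVj0), mul_nonneg hρj0 (sub_nonneg.2 hlamV)]
  · nlinarith [mul_nonneg hlam (mul_nonneg hVj0 (sub_nonneg.2 hρl1)),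
      mul_le_mul_of_nonneg_left hVdiff hlam,
      mul_nonneg (sub_nonneg.2 hρj1) (sub_nonneg.2 hCFL),
      mul_nonneg hlam (mul_nonneg (sub_nonneg.2 hρj1) (sub_nonneg.2 hVrM))]

theorem abs_nonlocalCorrection_le (hw : ∀ m, |w m| ≤ C) (hV : ∀ m, |V (w m)| ≤ K) (m : ℤ) :
    |nonlocalCorrection V w m| ≤ C * (K + K) := by
  rw [nonlocalCorrection, abs_mul]
  exact mul_le_mul (hw m) ((abs_sub _ _).trans (add_le_add (hV m) (hV _)))
    (abs_nonneg _) ((abs_nonneg _).trans (hw m))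

theorem sub_mul_nonlocalCorrection_nonneg (hVmono : AntitoneOn V (Icc 0 1)) (hw : ∀ m, w m ∈ Icc 0 1)
    (m : ℤ) : 0 ≤ (w (m + 1) - w m) * nonlocalCorrection V w m := by
  rw [nonlocalCorrection, mul_left_comm]
  exact mul_nonneg (hw m).1 (hVmono.sub_mul_sub_nonneg (hw _) (hw _))

theorem abs_nonlocalCorrection_le_mul (hVlip : ∀ x y, |V x - V y| ≤ L * |x - y|)
    (hw : ∀ m, w m ∈ Icc 0 1) (m : ℤ) :
    |nonlocalCorrection V w m| ≤ L * |w (m + 1) - w m| := by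
  rw [nonlocalCorrection, abs_mul, abs_of_nonneg (hw m).1, abs_sub_comm (w (m + 1))]
  exact (mul_le_of_le_one_left (abs_nonneg _) (hw m).2).trans (hVlip _ _)

theorem nonlocalAvg_godunovStep (hγ0 : γ0 ∈ Ioc 0 1) (hρ : ∀ m, |ρ m| ≤ C)
    (hw : nonlocalAvg (geomWeights γ0) ρ = w) (hV : ∀ m, |V (w m)| ≤ K) (j : ℤ) :
    nonlocalAvg (geomWeights γ0) (godunovStep lam V (geomWeights γ0) ρ) j =
      w j - lam * (V (w j) * (w j - w (j - 1)))
        + lam * nonlocalAvg (geomWeights γ0) (nonlocalCorrection V w) j := by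
  have hγ := geomWeights_nonneg (Ioc_subset_Icc_self hγ0)
  have hγ1 := hasSum_geomWeights hγ0
  have hwC : ∀ m, |w m| ≤ C := hw ▸ abs_nonlocalAvg_le_of_abs_le hγ hγ1 hρ
  have hrec : ∀ m, w m = γ0 * ρ m + (1 - γ0) * w (m + 1) := fun m => hw ▸
    nonlocalAvg_geomWeights hγ0 hρ m
  set q := 1 - γ0
  set u : ℤ → ℝ := fun m => V (w m) * (w m - w (m - 1)) with hu
  set g := nonlocalCorrection V w
  have huC : ∀ m, |u m| ≤ K * (C + C) := fun m => by
    rw [hu, abs_mul]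
    exact mul_le_mul (hV m) ((abs_sub _ _).trans (add_le_add (hwC m) (hwC _)))
      (abs_nonneg _) ((abs_nonneg _).trans (hV m))
  -- `γ0 * ρ m = w m - (1 - γ0) * w (m + 1)` turns the flux difference into a telescoping term
  have hflux : ∀ m, γ0 * (godunovStep lam V (geomWeights γ0) ρ m - ρ m) =
      lam * (q * u (m + 1) - u m + γ0 * g m) := by
    intro m
    have h1 := hrec (m - 1)
    rw [sub_add_cancel] at h1
    simp only [godunovStep, hw, hu, g, nonlocalCorrection, add_sub_cancel_right]
    linear_combination (-lam * V (w m)) * h1 + lam * V (w (m + 1)) * hrec m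
  have hterm : ∀ k : ℕ, geomWeights γ0 k * godunovStep lam V (geomWeights γ0) ρ (j + k) =
      geomWeights γ0 k * ρ (j + k)
        + lam * (q ^ (k + 1) * u (j + ↑(k + 1)) - q ^ k * u (j + k))
        + lam * (geomWeights γ0 k * g (j + k)) := by
    intro k
    have h := hflux (j + k)
    rw [show j + ↑(k + 1) = j + k + 1 by push_cast; ring]
    simp only [geomWeights]
    linear_combination q ^ k * h
  have htel : HasSum (fun k : ℕ => q ^ (k + 1) * u (j + ↑(k + 1)) - q ^ k * u (j + k)) (-u j) := by
    simpa using (summable_nonlocalAvg (fun k => pow_nonneg (sub_nonneg.2 hγ0.2) k)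
      (summable_geometric_of_lt_one (sub_nonneg.2 hγ0.2) (by linarith [hγ0.1])) huC
      j).hasSum_succ_sub
  have hsum := (((summable_nonlocalAvg hγ hγ1.summable hρ j).hasSum.add (htel.mul_left lam)).add
    ((summable_nonlocalAvg hγ hγ1.summable (abs_nonlocalCorrection_le hwC hV) j).hasSum.mul_left
      lam))
  rw [← funext hterm] at hsum
  change ∑' k : ℕ, _ = _
  rw [hsum.tsum_eq]
  change nonlocalAvg _ ρ j + lam * -u j + lam * nonlocalAvg _ g j = _
  rw [hw]
  ring

theorem nonlocalAvg_godunovStep_succ_sub (hγ0 : γ0 ∈ Ioc 0 1) (hρ : ∀ m, |ρ m| ≤ C)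
    (hw : nonlocalAvg (geomWeights γ0) ρ = w) (hV : ∀ m, |V (w m)| ≤ K) (j : ℤ) :
    nonlocalAvg (geomWeights γ0) (godunovStep lam V (geomWeights γ0) ρ) (j + 1)
      - nonlocalAvg (geomWeights γ0) (godunovStep lam V (geomWeights γ0) ρ) j =
      lam * V (w j) * (w j - w (j - 1))
        + ((1 - lam * V (w (j + 1))) * (w (j + 1) - w j) - lam * γ0 * nonlocalCorrection V w j)
        + lam * γ0 * nonlocalAvg (geomWeights γ0) (nonlocalCorrection V w) (j + 1) := by
  have hwC : ∀ m, |w m| ≤ C := hw ▸ abs_nonlocalAvg_le_of_abs_le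
    (geomWeights_nonneg (Ioc_subset_Icc_self hγ0)) (hasSum_geomWeights hγ0) hρ
  rw [nonlocalAvg_godunovStep hγ0 hρ hw hV, nonlocalAvg_godunovStep hγ0 hρ hw hV,
    nonlocalAvg_geomWeights hγ0 (abs_nonlocalCorrection_le hwC hV) j, add_sub_cancel_right]
  ring

theorem totalVariation_nonlocalAvg_godunovStep_le (hlam : 0 ≤ lam) (hL : 0 ≤ L)
    (hVlip : ∀ x y, |V x - V y| ≤ L * |x - y|) (hVmono : AntitoneOn V (Icc 0 1))
    (hVbd : ∀ ξ ∈ Icc (0 : ℝ) 1, V ξ ∈ Icc 0 M) (hCFL : lam * (M + L) ≤ 1)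
    (hγ0 : γ0 ∈ Ioc 0 1) (hρ : ∀ m, ρ m ∈ Icc 0 1) :
    totalVariation (nonlocalAvg (geomWeights γ0) (godunovStep lam V (geomWeights γ0) ρ)) ≤
      totalVariation (nonlocalAvg (geomWeights γ0) ρ) := by
  obtain ⟨w, hw⟩ : ∃ w, nonlocalAvg (geomWeights γ0) ρ = w := ⟨_, rfl⟩
  set g := nonlocalCorrection V w
  have hγ := geomWeights_nonneg (Ioc_subset_Icc_self hγ0)
  have hγ1 := hasSum_geomWeights hγ0
  have hlamγ0 : 0 ≤ lam * γ0 := mul_nonneg hlam hγ0.1.le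
  have hw01 : ∀ m, w m ∈ Icc 0 1 := hw ▸ nonlocalAvg_mem_Icc hγ hγ1 hρ
  have hVw : ∀ m, V (w m) ∈ Icc 0 M := fun m => hVbd _ (hw01 m)
  have hρC : ∀ m, |ρ m| ≤ 1 := fun m => (abs_of_nonneg (hρ m).1).trans_le (hρ m).2
  have hVM : ∀ m, |V (w m)| ≤ M := fun m => (abs_of_nonneg (hVw m).1).trans_le (hVw m).2
  have hgC := abs_nonlocalCorrection_le
    (fun m => (abs_of_nonneg (hw01 m).1).trans_le (hw01 m).2) hVM
  unfold totalVariation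
  rw [hw]
  refine tsum_ofReal_le_of_le_add_nonlocalAvg hγ hγ1 (C := lam * γ0 * (1 * (M + M)))
    (p := fun j => lam * V (w j) * |w j - w (j - 1)|)
    (r := fun j => |(1 - lam * V (w (j + 1))) * (w (j + 1) - w j) - lam * γ0 * g j|)
    (s := fun m => lam * γ0 * |g m|)
    (fun j => mul_nonneg (mul_nonneg hlam (hVw j).1) (abs_nonneg _)) (fun j => abs_nonneg _)
    (fun m => ⟨mul_nonneg hlamγ0 (abs_nonneg _), mul_le_mul_of_nonneg_left (hgC m) hlamγ0⟩)
    (fun j => ?_) (fun m => ?_)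
  · rw [nonlocalAvg_godunovStep_succ_sub hγ0 hρC hw hVM]
    refine (abs_add_three _ _ _).trans (add_le_add (add_le_add ?_ le_rfl) ?_)
    · rw [abs_mul, abs_of_nonneg (mul_nonneg hlam (hVw j).1)]
    · rw [nonlocalAvg_const_mul, abs_mul, abs_of_nonneg hlamγ0]
      exact mul_le_mul_of_nonneg_left (abs_nonlocalAvg_le hγ hγ1.summable hgC _) hlamγ0
  · simp only [add_sub_cancel_right]
    exact abs_incremental_split hlam hL hCFL (Ioc_subset_Icc_self hγ0) (hVw (m + 1)).2
      (sub_mul_nonlocalCorrection_nonneg hVmono hw01 m) (abs_nonlocalCorrection_le_mul hVlip hw01 m)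

end Godunov

theorem godunov_W_TVD_space_geometric_general
    (lam M L : ℝ) (hlam : 0 < lam) (hL : 0 ≤ L)
    (V : ℝ → ℝ)
    (hVlip : ∀ x y : ℝ, |V x - V y| ≤ L * |x - y|)
    (hVmono : ∀ x ∈ Set.Icc (0:ℝ) 1, ∀ y ∈ Set.Icc (0:ℝ) 1, x ≤ y → V y ≤ V x)
    (hVbd : ∀ ξ ∈ Set.Icc (0:ℝ) 1, V ξ ∈ Set.Icc (0:ℝ) M)
    (γ : ℕ → ℝ)
    (ρ0 : ℤ → ℝ) (hρ0 : ∀ j, ρ0 j ∈ Set.Icc (0:ℝ) 1)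
    (ρ W : ℕ → ℤ → ℝ)
    (hinit : ∀ j : ℤ, ρ 0 j = ρ0 j)
    (hW : ∀ (n : ℕ) (j : ℤ), W n j = ∑' k : ℕ, γ k * ρ n (j + (k:ℤ)))
    (hupd : ∀ (n : ℕ) (j : ℤ),
      ρ (n+1) j = ρ n j + lam * (ρ n (j-1) * V (W n j) - ρ n j * V (W n (j+1))))
    (hCFL : lam * (M + L) ≤ 1)
    (γ0 : ℝ) (hγ0 : γ0 ∈ Set.Ioo (0:ℝ) 1)
    (hgeom : ∀ k : ℕ, γ k = γ0 * (1 - γ0)^k) :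
    ∀ n : ℕ,
      (∑' j : ℤ, ENNReal.ofReal |W (n+1) (j+1) - W (n+1) j| ≤
        ∑' j : ℤ, ENNReal.ofReal |W n (j+1) - W n j|) ∧
      (∑' j : ℤ, ENNReal.ofReal |W n (j+1) - W n j| ≤
        ∑' j : ℤ, ENNReal.ofReal |ρ0 (j+1) - ρ0 j|) := by
  have hγ : γ = geomWeights γ0 := funext hgeom
  subst hγ
  have hγ0' : γ0 ∈ Ioc 0 1 := ⟨hγ0.1, hγ0.2.le⟩
  have hWavg : ∀ n, W n = nonlocalAvg (geomWeights γ0) (ρ n) := fun n => funext (hW n)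
  have hstep : ∀ n, ρ (n + 1) = godunovStep lam V (geomWeights γ0) (ρ n) := fun n =>
    funext fun j => by rw [hupd, hWavg]; rfl
  have hρ : ∀ n j, ρ n j ∈ Icc 0 1 := by
    intro n
    induction n with
    | zero => exact fun j => hinit j ▸ hρ0 j
    | succ n ih =>
      rw [hstep]
      exact godunovStep_mem_Icc hlam.le hL hVlip hVmono hVbd hCFL hγ0' ih
  have hTV : ∀ n, totalVariation (W (n + 1)) ≤ totalVariation (W n) := fun n => by
    rw [hWavg, hWavg, hstep]
    exact totalVariation_nonlocalAvg_godunovStep_le hlam.le hL hVlip hVmono hVbd hCFL hγ0' (hρ n)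
  intro n
  refine ⟨hTV n, ?_⟩
  induction n with
  | zero =>
    rw [hWavg, funext hinit]
    exact totalVariation_nonlocalAvg_le (geomWeights_nonneg (Ioc_subset_Icc_self hγ0'))
      (hasSum_geomWeights hγ0') fun m => (abs_of_nonneg (hρ0 m).1).trans_le (hρ0 m).2
  | succ n ih => exact (hTV n).trans ih

/-- Spatial total variation diminishing property with geometric weights,
under the weaker CFL condition `λ (M + L) ≤ 1`. -/
theorem godunov_W_TVD_space_geometric
    (lam M L : ℝ) (hlam : 0 < lam) (hM : 0 ≤ M) (hL : 0 ≤ L)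
    (V : ℝ → ℝ)
    (hVlip : ∀ x y : ℝ, |V x - V y| ≤ L * |x - y|)
    (hVmono : ∀ x ∈ Set.Icc (0:ℝ) 1, ∀ y ∈ Set.Icc (0:ℝ) 1, x ≤ y → V y ≤ V x)
    (hVbd : ∀ ξ ∈ Set.Icc (0:ℝ) 1, V ξ ∈ Set.Icc (0:ℝ) M)
    (γ : ℕ → ℝ)
    (hγnn : ∀ k, 0 ≤ γ k) (hγmono : ∀ k, γ (k+1) ≤ γ k)
    (hγsum : HasSum γ 1)
    (ρ0 : ℤ → ℝ) (hρ0 : ∀ j, ρ0 j ∈ Set.Icc (0:ℝ) 1)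
    (ρ W : ℕ → ℤ → ℝ)
    (hinit : ∀ j : ℤ, ρ 0 j = ρ0 j)
    (hW : ∀ (n : ℕ) (j : ℤ), W n j = ∑' k : ℕ, γ k * ρ n (j + (k:ℤ)))
    (hupd : ∀ (n : ℕ) (j : ℤ),
      ρ (n+1) j = ρ n j + lam * (ρ n (j-1) * V (W n j) - ρ n j * V (W n (j+1))))
    (hCFL : lam * (M + L) ≤ 1)
    (γ0 : ℝ) (hγ0 : γ0 ∈ Set.Ioo (0:ℝ) 1)
    (hgeom : ∀ k : ℕ, γ k = γ0 * (1 - γ0)^k) :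
    ∀ n : ℕ,
      (∑' j : ℤ, ENNReal.ofReal |W (n+1) (j+1) - W (n+1) j| ≤
        ∑' j : ℤ, ENNReal.ofReal |W n (j+1) - W n j|) ∧
      (∑' j : ℤ, ENNReal.ofReal |W n (j+1) - W n j| ≤
        ∑' j : ℤ, ENNReal.ofReal |ρ0 (j+1) - ρ0 j|) :=
  godunov_W_TVD_space_geometric_general lam M L hlam hL V hVlip hVmono hVbd γ ρ0 hρ0 ρ W hinit hW
    hupd hCFL γ0 hγ0 hgeom
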